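/- arXiv:2304.09839 — 3 statements merged into one kernel-verified Lean document; each statement's English description precedes it below -/
import Mathlib

section
/- Let n, ℓ, δ be positive integers with 2δ < ℓ ≤ n/2, ℓ ∣ n, b = n/ℓ ≥ 3, and suppose 2δ does not divide ℓ. If C ⊆ 𝔽₂ⁿ is a code that detects up to δ deletions per block, then |C| ≤ 2^{n−2δ(b−1)} (equivalently, its redundancy satisfies r ≥ 2δ(n/ℓ − 1)). -/
/-- The `i`-th bit (0-indexed) of `x ∈ 𝔽₂ⁿ`, with default `false` out of range. -/
def bitAt (n : ℕ) (x : Fin n → Bool) (i : ℕ) : Bool :=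
  if h : i < n then x ⟨i, h⟩ else false

/-- The `j`-th block (1-indexed, of length `ℓ`) of `x ∈ 𝔽₂ⁿ`, as a list. -/
def blockList (n ℓ : ℕ) (x : Fin n → Bool) (j : ℕ) : List Bool :=
  (List.range ℓ).map (fun i => bitAt n x ((j - 1) * ℓ + i))

/-- `y` is a `δ`-per-block deletion output of `x` with deletion pattern `d`:
`y = ⟨y¹,…,y^b⟩` where each `y^j` is a subsequence of block `j` of `x`
of length `ℓ - d j`, with `d j ≤ δ`. -/
def IsDelOutput (n ℓ δ : ℕ) (x : Fin n → Bool) (d : ℕ → ℕ) (y : List Bool) : Prop :=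
  ∃ ys : ℕ → List Bool,
    (∀ j ∈ Finset.Icc 1 (n / ℓ),
      (ys j).Sublist (blockList n ℓ x j) ∧ d j ≤ δ ∧ (ys j).length = ℓ - d j) ∧
    y = ((List.range (n / ℓ)).map (fun j => ys (j + 1))).flatten

/-- `C ⊆ 𝔽₂ⁿ` detects up to `δ` deletions per block. -/
def Detects (n ℓ δ : ℕ) (C : Set (Fin n → Bool)) : Prop :=
  ∀ x ∈ C, ∀ x' ∈ C, ∀ d d' : ℕ → ℕ, ∀ y : List Bool,
    IsDelOutput n ℓ δ x d y → IsDelOutput n ℓ δ x' d' y →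
    ∀ j ∈ Finset.Icc 1 (n / ℓ), d j = d' j

/-- The 0-indexed starting position `α_j - 1` of block `j` in the output,
given the deletion pattern `d`. -/
def startIdx (ℓ : ℕ) (d : ℕ → ℕ) (j : ℕ) : ℕ :=
  ∑ m ∈ Finset.Icc 1 (j - 1), (ℓ - d m)

/-- The window `(y_{α_j},…,y_{α_j+ℓ-1})` of length `ℓ` of the list `y`
starting at 0-indexed position `s = α_j - 1`. -/
def window (ℓ : ℕ) (y : List Bool) (s : ℕ) : Fin ℓ → Bool :=
  fun i => y.getD (s + i) false

/-- `C` is block-by-block decodable. -/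
def BlockDecodable (n ℓ δ : ℕ) (C : Set (Fin n → Bool)) : Prop :=
  ∃ f : ℕ → (Fin ℓ → Bool) → ℕ,
    (∀ j w, f j w ≤ δ) ∧
    ∀ x ∈ C, ∀ d : ℕ → ℕ, ∀ y : List Bool, IsDelOutput n ℓ δ x d y →
      ∀ j ∈ Finset.Icc 1 (n / ℓ - 1),
        f j (window ℓ y (startIdx ℓ d j)) = d j

def seg (n : ℕ) (x : Fin n → Bool) (s L : ℕ) : List Bool :=
  (List.range L).map (fun i => bitAt n x (s + i))

lemma seg_length (n : ℕ) (x : Fin n → Bool) (s L : ℕ) : (seg n x s L).length = L := by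
  simp [seg]

lemma seg_split (n : ℕ) (x : Fin n → Bool) (s L a : ℕ) (h : a ≤ L) :
    seg n x s L = seg n x s a ++ seg n x (s + a) (L - a) := by
  unfold seg
  conv_lhs => rw [show L = a + (L - a) by omega]
  rw [List.range_add, List.map_append, List.map_map]
  congr 1
  apply List.map_congr_left
  intro i _
  simp [Function.comp, Nat.add_assoc]

lemma seg_one (n : ℕ) (x : Fin n → Bool) (s : ℕ) : seg n x s 1 = [bitAt n x s] := by
  simp [seg, List.range_succ]

lemma seg_cons (n : ℕ) (x : Fin n → Bool) (s L : ℕ) (hL : 1 ≤ L) :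
    seg n x s L = bitAt n x s :: seg n x (s + 1) (L - 1) := by
  rw [seg_split n x s L 1 hL, seg_one]
  rfl

lemma seg_snoc (n : ℕ) (x : Fin n → Bool) (s L : ℕ) (hL : 1 ≤ L) :
    seg n x s L = seg n x s (L - 1) ++ [bitAt n x (s + (L - 1))] := by
  conv_lhs => rw [seg_split n x s L (L - 1) (by omega)]
  rw [show L - (L - 1) = 1 by omega, seg_one]

lemma seg_congr {n n' : ℕ} {x : Fin n → Bool} {x' : Fin n' → Bool} {s s' L : ℕ}
    (h : ∀ i, i < L → bitAt n x (s + i) = bitAt n' x' (s' + i)) :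
    seg n x s L = seg n' x' s' L :=
  List.map_congr_left fun i hi => h i (List.mem_range.mp hi)

lemma seg_sublist_block (n ℓ : ℕ) (x : Fin n → Bool) (m off len : ℕ) (h : off + len ≤ ℓ) :
    (seg n x ((m - 1) * ℓ + off) len).Sublist (blockList n ℓ x m) := by
  show (seg n x ((m - 1) * ℓ + off) len).Sublist (seg n x ((m - 1) * ℓ) ℓ)
  rw [seg_split n x ((m - 1) * ℓ) ℓ off (by omega),
      seg_split n x ((m - 1) * ℓ + off) (ℓ - off) len (by omega)]
  exact (List.sublist_append_left _ _).trans (List.sublist_append_right _ _)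

lemma flatten_shift (tf cf : ℕ → List Bool) (k : ℕ) :
    ((List.range k).map (fun j => tf j ++ cf j)).flatten ++ tf k
      = tf 0 ++ ((List.range k).map (fun j => cf j ++ tf (j + 1))).flatten := by
  induction k with
  | zero => simp
  | succ k ih =>
    rw [List.range_succ]
    simp only [List.map_append, List.map_cons, List.map_nil, List.flatten_append,
      List.flatten_cons, List.flatten_nil, List.append_nil]
    calc (((List.range k).map (fun j => tf j ++ cf j)).flatten ++ (tf k ++ cf k)) ++ tf (k + 1)
        = (((List.range k).map (fun j => tf j ++ cf j)).flatten ++ tf k) ++ (cf k ++ tf (k + 1)) := by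
          simp [List.append_assoc]
      _ = (tf 0 ++ ((List.range k).map (fun j => cf j ++ tf (j + 1))).flatten) ++ (cf k ++ tf (k + 1)) := by
          rw [ih]
      _ = tf 0 ++ (((List.range k).map (fun j => cf j ++ tf (j + 1))).flatten ++ (cf k ++ tf (k + 1))) := by
          simp [List.append_assoc]

lemma flatten_eq_of_shift (b : ℕ) (F G tf cf : ℕ → List Bool)
    (h0 : tf 0 = []) (hb : tf b = [])
    (hF : ∀ j, j < b → F j = tf j ++ cf j) (hG : ∀ j, j < b → G j = cf j ++ tf (j + 1)) :
    ((List.range b).map F).flatten = ((List.range b).map G).flatten := by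
  rw [List.map_congr_left (fun j hj => hF j (List.mem_range.mp hj)),
      List.map_congr_left (fun j hj => hG j (List.mem_range.mp hj))]
  have h := flatten_shift tf cf b
  rw [h0, hb, List.append_nil, List.nil_append] at h
  exact h

lemma isDelOutput_seg (n ℓ δ : ℕ) (x : Fin n → Bool) (off dd : ℕ → ℕ)
    (hoff : ∀ m, 1 ≤ m → m ≤ n / ℓ → off m + (ℓ - dd m) ≤ ℓ)
    (hdd : ∀ m, 1 ≤ m → m ≤ n / ℓ → dd m ≤ δ)
    (y : List Bool)
    (hy : y = ((List.range (n / ℓ)).map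
      (fun j => seg n x (j * ℓ + off (j + 1)) (ℓ - dd (j + 1)))).flatten) :
    IsDelOutput n ℓ δ x dd y := by
  subst hy
  refine ⟨fun m => seg n x ((m - 1) * ℓ + off m) (ℓ - dd m), fun m hm => ?_, rfl⟩
  rw [Finset.mem_Icc] at hm
  exact ⟨seg_sublist_block n ℓ x m (off m) (ℓ - dd m) (hoff m hm.1 hm.2),
    hdd m hm.1 hm.2, seg_length n x _ _⟩

lemma lemA_collision (n ℓ δ b : ℕ) (hbq : n / ℓ = b) (hδ : 0 < δ) (hℓ : 2 * δ < ℓ)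
    (C : Set (Fin n → Bool)) (hC : Detects n ℓ δ C)
    (x : Fin n → Bool) (hx : x ∈ C)
    (k p q : ℕ) (hk1 : 1 ≤ k) (hk2 : k + 1 ≤ b) (hp : p < δ) (hq : q < δ)
    (heq : bitAt n x (k * ℓ - 1 - p) = bitAt n x (k * ℓ + q)) : False := by
  classical
  have hkl : ℓ ≤ k * ℓ := Nat.le_mul_of_pos_left ℓ (by omega)
  set dA : ℕ → ℕ := fun m => if m = k then p + 1 else if m = k + 1 then q else 0 with hdA
  set dB : ℕ → ℕ := fun m => if m = k then p else if m = k + 1 then q + 1 else 0 with hdB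
  set offA : ℕ → ℕ := fun m => if m = k + 1 then q else 0 with hoffA
  set offB : ℕ → ℕ := fun m => if m = k + 1 then q + 1 else 0 with hoffB
  set tf : ℕ → List Bool := fun m => if m = k then [bitAt n x (k * ℓ + q)] else [] with htf
  set cf : ℕ → List Bool := fun j =>
    if j + 1 = k then seg n x (j * ℓ) (ℓ - (p + 1))
    else if j + 1 = k + 1 then seg n x (j * ℓ + (q + 1)) (ℓ - (q + 1))
    else seg n x (j * ℓ) ℓ with hcf
  set yA : List Bool :=
    ((List.range (n / ℓ)).map
      (fun j => seg n x (j * ℓ + offA (j + 1)) (ℓ - dA (j + 1)))).flatten with hyA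
  have hIA : IsDelOutput n ℓ δ x dA yA := by
    refine isDelOutput_seg n ℓ δ x offA dA ?_ ?_ yA hyA
    · intro m _ _; simp only [hdA, hoffA]; split_ifs <;> omega
    · intro m _ _; simp only [hdA]; split_ifs <;> omega
  have hFA : ∀ j, j < b → seg n x (j * ℓ + offA (j + 1)) (ℓ - dA (j + 1)) = tf j ++ cf j := by
    intro j _
    have hjs : (j + 1) * ℓ = j * ℓ + ℓ := by ring
    simp only [hdA, hoffA, htf, hcf, Nat.add_sub_cancel]
    rcases eq_or_ne (j + 1) k with hk | hnk
    · subst hk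
      simp [show ¬ (j = j + 1) from by omega, show ¬ (j + 1 = j + 1 + 1) from by omega]
    · rcases eq_or_ne j k with hk2' | hnj
      · subst hk2'
        simp only [show ((j:ℕ) + 1 = j) = False from eq_false (by omega),
          show ((j:ℕ) = j) = True from eq_true rfl,
          show ((j:ℕ) + 1 = j + 1) = True from eq_true rfl,
          if_false, if_true, List.singleton_append]
        rw [seg_cons n x (j * ℓ + q) (ℓ - q) (by omega),
          show j * ℓ + q + 1 = j * ℓ + (q + 1) from by omega,
          show ℓ - q - 1 = ℓ - (q + 1) from by omega]
      · simp [hnk, hnj, show ¬ (j + 1 = k + 1) from by omega]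
  have hGB : ∀ j, j < b → seg n x (j * ℓ + offB (j + 1)) (ℓ - dB (j + 1)) = cf j ++ tf (j + 1) := by
    intro j _
    have hjs : (j + 1) * ℓ = j * ℓ + ℓ := by ring
    simp only [hdB, hoffB, htf, hcf]
    rcases eq_or_ne (j + 1) k with hk | hnk
    · subst hk
      simp only [show ((j:ℕ) + 1 = j + 1 + 1) = False from eq_false (by omega),
        show ((j:ℕ) + 1 = j + 1) = True from eq_true rfl, if_false, if_true, Nat.add_zero]
      rw [seg_snoc n x (j * ℓ) (ℓ - p) (by omega),
        show j * ℓ + (ℓ - p - 1) = (j + 1) * ℓ - 1 - p from by omega,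
        heq, show ℓ - p - 1 = ℓ - (p + 1) from by omega]
    · rcases eq_or_ne j k with hk2' | hnj
      · subst hk2'
        simp [show ¬ (j + 1 = j) from by omega, show (j:ℕ) + 1 ≠ j + 1 + 1 from by omega]
      · simp [hnk, hnj, show ¬ (j + 1 = k + 1) from by omega]
  have hflat : yA = ((List.range (n / ℓ)).map
      (fun j => seg n x (j * ℓ + offB (j + 1)) (ℓ - dB (j + 1)))).flatten := by
    rw [hyA, hbq]
    exact flatten_eq_of_shift b _ _ tf cf
      (by simp only [htf]; rw [if_neg (show ¬ (0 = k) from by omega)])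
      (by simp only [htf]; rw [if_neg (show ¬ (b = k) from by omega)])
      hFA hGB
  have hIB : IsDelOutput n ℓ δ x dB yA := by
    refine isDelOutput_seg n ℓ δ x offB dB ?_ ?_ yA hflat
    · intro m _ _; simp only [hdB, hoffB]; split_ifs <;> omega
    · intro m _ _; simp only [hdB]; split_ifs <;> omega
  have hmem : k ∈ Finset.Icc 1 (n / ℓ) := Finset.mem_Icc.mpr ⟨hk1, by rw [hbq]; omega⟩
  have hd := hC x hx x hx dA dB yA hIA hIB k hmem
  simp only [hdA, hdB, if_pos rfl] at hd
  omega

lemma lemA (n ℓ δ b : ℕ) (hbq : n / ℓ = b) (hδ : 0 < δ) (hℓ : 2 * δ < ℓ)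
    (C : Set (Fin n → Bool)) (hC : Detects n ℓ δ C)
    (x : Fin n → Bool) (hx : x ∈ C) (k : ℕ) (hk1 : 1 ≤ k) (hk2 : k + 1 ≤ b) :
    ∃ β : Bool, (∀ t, t < δ → bitAt n x (k * ℓ - δ + t) = β) ∧
      (∀ t, t < δ → bitAt n x (k * ℓ + t) = !β) := by
  have hkl : ℓ ≤ k * ℓ := Nat.le_mul_of_pos_left ℓ (by omega)
  have hBool : ∀ a c : Bool, ¬ a = c → a = !c := by decide
  by_contra hcon
  push_neg at hcon
  by_cases h1 : ∃ q, q < δ ∧ bitAt n x (k * ℓ + q) = bitAt n x (k * ℓ - 1)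
  · obtain ⟨q, hq, hqe⟩ := h1
    exact lemA_collision n ℓ δ b hbq hδ hℓ C hC x hx k 0 q hk1 hk2 hδ hq
      (by rw [Nat.sub_zero]; exact hqe.symm)
  · push_neg at h1
    by_cases h2 : ∃ p, p < δ ∧ bitAt n x (k * ℓ - 1 - p) = !(bitAt n x (k * ℓ - 1))
    · obtain ⟨p, hp, hpe⟩ := h2
      refine lemA_collision n ℓ δ b hbq hδ hℓ C hC x hx k p 0 hk1 hk2 hp hδ ?_
      rw [hpe, Nat.add_zero]
      exact (hBool _ _ (h1 0 hδ)).symm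
    · push_neg at h2
      have hA : ∀ t, t < δ → bitAt n x (k * ℓ - δ + t) = bitAt n x (k * ℓ - 1) := by
        intro t ht
        have h3 := h2 (δ - 1 - t) (by omega)
        rw [show k * ℓ - 1 - (δ - 1 - t) = k * ℓ - δ + t from by omega] at h3
        have h4 : ∀ a c : Bool, ¬ a = !c → a = c := by decide
        exact h4 _ _ h3
      obtain ⟨t, ht, hne⟩ := hcon (bitAt n x (k * ℓ - 1)) hA
      exact hne (hBool _ _ (h1 t ht))

lemma lemB (n ℓ δ b : ℕ) (hbq : n / ℓ = b) (hδ : 0 < δ) (hℓ : 2 * δ < ℓ)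
    (C : Set (Fin n → Bool)) (hC : Detects n ℓ δ C)
    (x x' : Fin n → Bool) (hx : x ∈ C) (hx' : x' ∈ C)
    (hagree : ∀ pp : ℕ, (∀ k, 1 ≤ k → k + 1 ≤ b → ¬(k * ℓ - δ ≤ pp ∧ pp < k * ℓ + δ)) →
      bitAt n x pp = bitAt n x' pp) :
    x = x' := by
  classical
  have hBoolne : ∀ a c : Bool, ¬ a = c → c = !a := by decide
  have hgx : ∀ k : ℕ, ∃ β : Bool, 1 ≤ k → k + 1 ≤ b →
      (∀ t, t < δ → bitAt n x (k * ℓ - δ + t) = β) ∧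
      (∀ t, t < δ → bitAt n x (k * ℓ + t) = !β) := by
    intro k
    by_cases h : 1 ≤ k ∧ k + 1 ≤ b
    · obtain ⟨β, h1, h2⟩ := lemA n ℓ δ b hbq hδ hℓ C hC x hx k h.1 h.2
      exact ⟨β, fun _ _ => ⟨h1, h2⟩⟩
    · exact ⟨true, fun h1 h2 => absurd ⟨h1, h2⟩ h⟩
  have hgy : ∀ k : ℕ, ∃ β : Bool, 1 ≤ k → k + 1 ≤ b →
      (∀ t, t < δ → bitAt n x' (k * ℓ - δ + t) = β) ∧
      (∀ t, t < δ → bitAt n x' (k * ℓ + t) = !β) := by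
    intro k
    by_cases h : 1 ≤ k ∧ k + 1 ≤ b
    · obtain ⟨β, h1, h2⟩ := lemA n ℓ δ b hbq hδ hℓ C hC x' hx' k h.1 h.2
      exact ⟨β, fun _ _ => ⟨h1, h2⟩⟩
    · exact ⟨true, fun h1 h2 => absurd ⟨h1, h2⟩ h⟩
  choose βx hβx using hgx
  choose βy hβy using hgy
  set SP : ℕ → Prop := fun m => 1 ≤ m ∧ m + 1 ≤ b ∧ ¬ βx m = βy m with hSP
  have hmul : ∀ k : ℕ, 1 ≤ k → ℓ ≤ k * ℓ := fun k hk => Nat.le_mul_of_pos_left ℓ (by omega)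
  -- master pointwise agreement away from SP-windows
  have hpt : ∀ pp : ℕ, (∀ k, SP k → ¬(k * ℓ - δ ≤ pp ∧ pp < k * ℓ + δ)) →
      bitAt n x pp = bitAt n x' pp := by
    intro pp hpp
    by_cases hw : ∀ k, 1 ≤ k → k + 1 ≤ b → ¬(k * ℓ - δ ≤ pp ∧ pp < k * ℓ + δ)
    · exact hagree pp hw
    · push_neg at hw
      obtain ⟨k, hk1, hk2, hge, hlt⟩ := hw
      have hnSP : ¬ SP k := fun h => hpp k h ⟨hge, hlt⟩
      have hββ : βx k = βy k := by
        by_contra hne'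
        exact hnSP ⟨hk1, hk2, hne'⟩
      have hkl := hmul k hk1
      rcases lt_or_ge pp (k * ℓ) with hh | hh
      · rw [show pp = k * ℓ - δ + (pp - (k * ℓ - δ)) from by omega,
          (hβx k hk1 hk2).1 _ (by omega), (hβy k hk1 hk2).1 _ (by omega), hββ]
      · rw [show pp = k * ℓ + (pp - k * ℓ) from by omega,
          (hβx k hk1 hk2).2 _ (by omega), (hβy k hk1 hk2).2 _ (by omega), hββ]
  by_contra hne
  have hex : ∃ m, SP m := by
    by_contra hS
    push_neg at hS
    apply hne
    funext i
    have h := hpt i.1 (fun k hk => absurd hk (hS k))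
    simpa [bitAt, i.isLt] using h
  -- swap fact at an SP boundary
  have hswapL : ∀ j, SP j → ∀ i, i < δ → bitAt n x' (j * ℓ + i) = bitAt n x (j * ℓ - δ + i) := by
    intro j hj i hi
    rw [(hβy j hj.1 hj.2.1).2 _ hi, (hβx j hj.1 hj.2.1).1 _ hi,
      hBoolne _ _ hj.2.2, Bool.not_not]
  -- window separation
  have hwin : ∀ j pp k, j * ℓ + δ ≤ pp → pp < (j + 1) * ℓ → k ≠ j + 1 →
      ¬(k * ℓ - δ ≤ pp ∧ pp < k * ℓ + δ) := by
    intro j pp k h1 h2 hk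
    have hjs : (j + 1) * ℓ = j * ℓ + ℓ := by ring
    rcases le_or_gt k j with h | h
    · have h5 : k * ℓ ≤ j * ℓ := mul_le_mul_left h ℓ
      omega
    · have hk2 : j + 2 ≤ k := by omega
      have h5 : (j + 2) * ℓ ≤ k * ℓ := mul_le_mul_left hk2 ℓ
      have h6 : (j + 2) * ℓ = j * ℓ + ℓ + ℓ := by ring
      omega
  -- safe positions
  have hsafe : ∀ j pp, j * ℓ + δ ≤ pp →
      (pp < (j + 1) * ℓ - δ ∨ (pp < (j + 1) * ℓ ∧ ¬ SP (j + 1))) →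
      bitAt n x pp = bitAt n x' pp := by
    intro j pp h1 h2
    apply hpt
    intro k hk
    rcases eq_or_ne k (j + 1) with rfl | hne'
    · rcases h2 with h2 | ⟨h2a, h2b⟩
      · intro hcon; omega
      · exact absurd hk h2b
    · refine hwin j pp k h1 ?_ hne'
      rcases h2 with h2 | h2
      · have hjs : (j + 1) * ℓ = j * ℓ + ℓ := by ring
        omega
      · exact h2.1
  -- the two patterns and outputs
  set eA : ℕ → ℕ := fun m => if SP (m - 1) then δ else 0 with heA
  set dB : ℕ → ℕ := fun m => if SP m then δ else 0 with hdB
  set zf : ℕ → ℕ := fun _ => 0 with hzf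
  set tf : ℕ → List Bool := fun m => if SP m then seg n x (m * ℓ - δ) δ else [] with htf
  set cf : ℕ → List Bool := fun j =>
    seg n x (j * ℓ + (if SP j then δ else 0))
      (ℓ - (if SP j then δ else 0) - (if SP (j + 1) then δ else 0)) with hcf
  set yA : List Bool := ((List.range (n / ℓ)).map
    (fun j => seg n x (j * ℓ + eA (j + 1)) (ℓ - eA (j + 1)))).flatten with hyA
  have hIA : IsDelOutput n ℓ δ x eA yA := by
    refine isDelOutput_seg n ℓ δ x eA eA ?_ ?_ yA hyA
    · intro m _ _; simp only [heA]; split_ifs <;> omega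
    · intro m _ _; simp only [heA]; split_ifs <;> omega
  have hE1 : ∀ j, j < b → seg n x (j * ℓ + eA (j + 1)) (ℓ - eA (j + 1)) = cf j ++ tf (j + 1) := by
    intro j hj
    have hjs : (j + 1) * ℓ = j * ℓ + ℓ := by ring
    simp only [heA, hcf, htf, Nat.add_sub_cancel]
    by_cases h1 : SP j <;> by_cases h2 : SP (j + 1)
    · simp only [if_pos h1, if_pos h2]
      rw [seg_split n x (j * ℓ + δ) (ℓ - δ) (ℓ - δ - δ) (by omega),
        show j * ℓ + δ + (ℓ - δ - δ) = (j + 1) * ℓ - δ from by omega,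
        show ℓ - δ - (ℓ - δ - δ) = δ from by omega]
    · simp only [if_pos h1, if_neg h2]
      simp
    · simp only [if_neg h1, if_pos h2, Nat.add_zero, Nat.sub_zero]
      rw [seg_split n x (j * ℓ) ℓ (ℓ - δ) (by omega),
        show j * ℓ + (ℓ - δ) = (j + 1) * ℓ - δ from by omega,
        show ℓ - (ℓ - δ) = δ from by omega]
    · simp only [if_neg h1, if_neg h2]
      simp
  have hE2 : ∀ j, j < b → seg n x' (j * ℓ + zf (j + 1)) (ℓ - dB (j + 1)) = tf j ++ cf j := by
    intro j hj
    have hjs : (j + 1) * ℓ = j * ℓ + ℓ := by ring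
    simp only [hdB, hzf, htf, hcf, Nat.add_zero]
    by_cases h1 : SP j <;> by_cases h2 : SP (j + 1)
    · simp only [if_pos h1, if_pos h2]
      have hjl := hmul j h1.1
      rw [seg_split n x' (j * ℓ) (ℓ - δ) δ (by omega)]
      congr 1
      · exact seg_congr (fun i hi => hswapL j h1 i hi)
      · refine seg_congr (fun i hi => ?_)
        exact (hsafe j (j * ℓ + δ + i) (by omega) (Or.inl (by omega))).symm
    · simp only [if_pos h1, if_neg h2]
      have hjl := hmul j h1.1
      rw [seg_split n x' (j * ℓ) (ℓ - 0) δ (by omega),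
        show ℓ - 0 - δ = ℓ - δ - 0 from by omega]
      congr 1
      · exact seg_congr (fun i hi => hswapL j h1 i hi)
      · refine seg_congr (fun i hi => ?_)
        exact (hsafe j (j * ℓ + δ + i) (by omega) (Or.inr ⟨by omega, h2⟩)).symm
    · simp only [if_neg h1, if_pos h2, List.nil_append, Nat.add_zero, Nat.sub_zero]
      refine (seg_congr (fun i hi => ?_)).symm
      show bitAt n x (j * ℓ + i) = bitAt n x' (j * ℓ + i)
      rcases lt_or_ge i δ with hiδ | hiδ
      · rcases Nat.eq_zero_or_pos j with rfl | hj1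
        · refine hpt (0 * ℓ + i) (fun k hk => ?_)
          have := hmul k hk.1
          omega
        · have hjb : j + 1 ≤ b := by omega
          have hββ : βx j = βy j := by
            by_contra hne'
            exact h1 ⟨hj1, hjb, hne'⟩
          rw [(hβx j hj1 hjb).2 _ hiδ, (hβy j hj1 hjb).2 _ hiδ, hββ]
      · exact hsafe j (j * ℓ + i) (by omega) (Or.inl (by omega))
    · simp only [if_neg h1, if_neg h2, List.nil_append, Nat.add_zero, Nat.sub_zero]
      refine (seg_congr (fun i hi => ?_)).symm
      show bitAt n x (j * ℓ + i) = bitAt n x' (j * ℓ + i)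
      rcases lt_or_ge i δ with hiδ | hiδ
      · rcases Nat.eq_zero_or_pos j with rfl | hj1
        · refine hpt (0 * ℓ + i) (fun k hk => ?_)
          have := hmul k hk.1
          omega
        · have hjb : j + 1 ≤ b := by omega
          have hββ : βx j = βy j := by
            by_contra hne'
            exact h1 ⟨hj1, hjb, hne'⟩
          rw [(hβx j hj1 hjb).2 _ hiδ, (hβy j hj1 hjb).2 _ hiδ, hββ]
      · exact hsafe j (j * ℓ + i) (by omega) (Or.inr ⟨by omega, h2⟩)
  have hSP0' : ¬ SP 0 := fun h => absurd h.1 (by omega)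
  have hSPb : ¬ SP b := fun h => absurd h.2.1 (by omega)
  have hflat : yA = ((List.range (n / ℓ)).map
      (fun j => seg n x' (j * ℓ + zf (j + 1)) (ℓ - dB (j + 1)))).flatten := by
    rw [hyA, hbq]
    exact (flatten_eq_of_shift b _ _ tf cf
      (by simp only [htf]; rw [if_neg hSP0'])
      (by simp only [htf]; rw [if_neg hSPb])
      hE2 hE1).symm
  have hIB : IsDelOutput n ℓ δ x' dB yA := by
    refine isDelOutput_seg n ℓ δ x' zf dB ?_ ?_ yA hflat
    · intro m _ _; simp only [hdB, hzf]; split_ifs <;> omega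
    · intro m _ _; simp only [hdB]; split_ifs <;> omega
  -- minimal SP index yields a pattern mismatch
  have hSP0 : SP (Nat.find hex) := Nat.find_spec hex
  have hmin : ¬ SP (Nat.find hex - 1) := by
    have h1 : 1 ≤ Nat.find hex := hSP0.1
    exact Nat.find_min hex (by omega)
  have hmem : Nat.find hex ∈ Finset.Icc 1 (n / ℓ) :=
    Finset.mem_Icc.mpr ⟨hSP0.1, by rw [hbq]; have := hSP0.2.1; omega⟩
  have hd := hC x hx x' hx' eA dB yA hIA hIB (Nat.find hex) hmem
  simp only [heA, hdB] at hd
  rw [if_neg hmin, if_pos hSP0] at hd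
  omega


/-- If b = n/l >= 3 and 2d does not divide l, any code detecting
up to d deletions per block satisfies |C| <= 2^(n - 2d(b-1)). -/
theorem redundancy_lower_bound_nondvd
    (n ℓ δ : ℕ) (hδ : 0 < δ) (hℓ : 2 * δ < ℓ) (hℓn : ℓ ≤ n / 2) (hdvd : ℓ ∣ n)
    (hb : 3 ≤ n / ℓ) (hnd : ¬ (2 * δ ∣ ℓ))
    (C : Set (Fin n → Bool)) (hC : Detects n ℓ δ C) :
    C.ncard ≤ 2 ^ (n - 2 * δ * (n / ℓ - 1)) := by
  have hℓpos : 0 < ℓ := by omega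
  have hnb : n / ℓ * ℓ = n := Nat.div_mul_cancel hdvd
  set b := n / ℓ with hbdef
  have hb1 : 1 ≤ b := by omega
  have hnpos : 0 < n := by omega
  have hbl : (b - 1) * ℓ + ℓ = b * ℓ := by
    have h9 : b - 1 + 1 = b := by omega
    calc (b - 1) * ℓ + ℓ = (b - 1 + 1) * ℓ := by ring
      _ = b * ℓ := by rw [h9]
  set f : ℕ × ℕ → Fin n := fun p => (⟨(p.1 * ℓ - δ + p.2) % n, Nat.mod_lt _ hnpos⟩ : Fin n)
    with hf
  set W : Finset (Fin n) :=
    ((Finset.Icc 1 (b - 1)) ×ˢ (Finset.range (2 * δ))).image f with hW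
  have hinj : Set.InjOn (fun (x : Fin n → Bool) => fun (i : {a : Fin n // a ∈ Wᶜ}) => x i.1) C := by
    intro x hx x' hx' hEq
    apply lemB n ℓ δ b hbdef.symm hδ hℓ C hC x x' hx hx'
    intro pp hpp
    by_cases hpn : pp < n
    · have hiW : (⟨pp, hpn⟩ : Fin n) ∈ Wᶜ := by
        rw [Finset.mem_compl, hW, Finset.mem_image]
        rintro ⟨⟨k, t⟩, hp, hfe⟩
        rw [Finset.mem_product, Finset.mem_Icc, Finset.mem_range] at hp
        obtain ⟨⟨hk1, hk2⟩, ht⟩ := hp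
        have hkl : ℓ ≤ k * ℓ := Nat.le_mul_of_pos_left ℓ (by omega)
        have hkb : k * ℓ ≤ (b - 1) * ℓ := mul_le_mul_left hk2 ℓ
        have hv : k * ℓ - δ + t < n := by omega
        have hval : k * ℓ - δ + t = pp := by
          have := congrArg Fin.val hfe
          simpa [hf, Nat.mod_eq_of_lt hv] using this
        exact hpp k hk1 (by omega) ⟨by omega, by omega⟩
      have h := congrFun hEq ⟨⟨pp, hpn⟩, hiW⟩
      simpa [bitAt, hpn] using h
    · simp [bitAt, hpn]
  have hcard : C.ncard ≤ 2 ^ (n - W.card) :=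
    calc C.ncard = ((fun (x : Fin n → Bool) => fun (i : {a : Fin n // a ∈ Wᶜ}) => x i.1) '' C).ncard :=
          (Set.ncard_image_of_injOn hinj).symm
    _ ≤ (Set.univ : Set ({a : Fin n // a ∈ Wᶜ} → Bool)).ncard :=
          Set.ncard_le_ncard (Set.subset_univ _) Set.finite_univ
    _ = Fintype.card ({a : Fin n // a ∈ Wᶜ} → Bool) := by
          rw [Set.ncard_univ, Nat.card_eq_fintype_card]
    _ = 2 ^ (Wᶜ.card) := by rw [Fintype.card_fun, Fintype.card_coe, Fintype.card_bool]
    _ = 2 ^ (n - W.card) := by rw [Finset.card_compl, Fintype.card_fin]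
  have hWge : 2 * δ * (b - 1) ≤ W.card := by
    have hinj2 : Set.InjOn f ((Finset.Icc 1 (b - 1)) ×ˢ (Finset.range (2 * δ)) : Finset (ℕ × ℕ)) := by
      rintro ⟨k, t⟩ hp ⟨k', t'⟩ hp' h
      simp only [Finset.coe_product, Set.mem_prod, Finset.mem_coe, Finset.mem_Icc,
        Finset.mem_range] at hp hp'
      obtain ⟨⟨hk1, hk2⟩, ht⟩ := hp
      obtain ⟨⟨hk1', hk2'⟩, ht'⟩ := hp'
      have hkl : ℓ ≤ k * ℓ := Nat.le_mul_of_pos_left ℓ (by omega)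
      have hkl' : ℓ ≤ k' * ℓ := Nat.le_mul_of_pos_left ℓ (by omega)
      have hkb : k * ℓ ≤ (b - 1) * ℓ := mul_le_mul_left hk2 ℓ
      have hkb' : k' * ℓ ≤ (b - 1) * ℓ := mul_le_mul_left hk2' ℓ
      have hv : k * ℓ - δ + t < n := by omega
      have hv' : k' * ℓ - δ + t' < n := by omega
      have h' : k * ℓ - δ + t = k' * ℓ - δ + t' := by
        have := congrArg Fin.val h
        simpa [hf, Nat.mod_eq_of_lt hv, Nat.mod_eq_of_lt hv'] using this
      have hkk : k = k' := by
        rcases lt_trichotomy k k' with hlt | heq' | hgt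
        · have h5 : (k + 1) * ℓ ≤ k' * ℓ := mul_le_mul_left (by omega) ℓ
          have h6 : (k + 1) * ℓ = k * ℓ + ℓ := by ring
          omega
        · exact heq'
        · have h5 : (k' + 1) * ℓ ≤ k * ℓ := mul_le_mul_left (by omega) ℓ
          have h6 : (k' + 1) * ℓ = k' * ℓ + ℓ := by ring
          omega
      subst hkk
      have : t = t' := by omega
      subst this
      rfl
    have hcardW : W.card = ((Finset.Icc 1 (b - 1)) ×ˢ (Finset.range (2 * δ))).card := by
      rw [hW]
      exact Finset.card_image_of_injOn hinj2
    rw [hcardW, Finset.card_product, Nat.card_Icc, Finset.card_range, Nat.add_sub_cancel]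
    exact le_of_eq (by ring)
  calc C.ncard ≤ 2 ^ (n - W.card) := hcard
    _ ≤ 2 ^ (n - 2 * δ * (b - 1)) := Nat.pow_le_pow_right (by norm_num) (by omega)
end

section
/- Let n, ℓ, δ be positive integers with 2δ < ℓ ≤ n/2, ℓ ∣ n and b = n/ℓ ≥ 2. If C ⊆ 𝔽₂ⁿ is a block-by-block decodable code that detects up to δ deletions per block, then |C| ≤ 2^{n−(2δ+1)(b−1)} (equivalently, its redundancy satisfies r ≥ (2δ+1)(n/ℓ − 1)). -/
/-!
Block decodability pins down every codeword of `C` near each block boundary. Deleting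
the last `e ≤ δ` bits of block `j` and the first `i ≤ δ` bits of block `j + 1` shows the decoder
for boundary `j` a window it must decode as `e`, so two such windows with different `e` never
coincide. Comparing suitable pairs of windows shows that the last `δ` bits of block `j` all equal
some bit `a`, the first `δ + 1` bits of block `j + 1` all equal `!a`, and that `a` is determined
by the first `ℓ - δ` bits of block `j`. Hence a codeword is determined by its bits outside the
`2δ + 1` positions around each of the `n / ℓ - 1` boundaries.
-/

theorem List.getD_flatten_map_range_add_mul {α : Type*} {g : ℕ → List α} {ℓ k b : ℕ}
    (hk : k ≤ b) (hg : ∀ m < k, (g m).length = ℓ) (t : ℕ) (a : α) :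
    ((List.range b).map g).flatten.getD (k * ℓ + t) a =
      ((List.range (b - k)).map fun m => g (k + m)).flatten.getD t a := by
  induction k generalizing b g with
  | zero => simp
  | succ k ih =>
    obtain ⟨b, rfl⟩ : ∃ b', b = b' + 1 := ⟨b - 1, by omega⟩
    have hg0 : (g 0).length = ℓ := hg 0 (Nat.succ_pos k)
    rw [List.range_succ_eq_map, List.map_cons, List.flatten_cons, List.map_map,
      List.getD_append_right _ _ _ _ (by rw [hg0, Nat.succ_mul]; omega), hg0,
      show (k + 1) * ℓ + t - ℓ = k * ℓ + t by rw [Nat.succ_mul]; omega,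
      ih (g := g ∘ Nat.succ) (by omega) fun m hm => hg (m + 1) (by omega)]
    simp only [Function.comp_apply, Nat.succ_sub_succ, Nat.succ_eq_add_one]
    congr! 4 with m
    rw [Nat.add_right_comm]

theorem Set.ncard_le_card_pow_of_eqOn_compl {ι β : Type*} [Fintype ι] [DecidableEq ι]
    [Fintype β] (C : Set (ι → β)) (D : Finset ι)
    (h : ∀ x ∈ C, ∀ x' ∈ C, Set.EqOn x x' (↑D)ᶜ → x = x') :
    C.ncard ≤ Fintype.card β ^ (Fintype.card ι - D.card) := by
  have hinj : C.InjOn fun x (i : ↥(Dᶜ : Finset ι)) => x i := fun x hx x' hx' hxx' =>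
    h x hx x' hx' fun i hi => congrFun hxx' ⟨i, by simpa using hi⟩
  calc C.ncard ≤ (Set.univ : Set (↥(Dᶜ : Finset ι) → β)).ncard :=
        Set.ncard_le_ncard_of_injOn _ (fun _ _ => Set.mem_univ _) hinj
    _ = Fintype.card β ^ (Fintype.card ι - D.card) := by
        rw [Set.ncard_univ, Nat.card_eq_fintype_card, Fintype.card_fun, Fintype.card_coe,
          Finset.card_compl]

lemma sub_one_mul_add_self {j : ℕ} (ℓ : ℕ) (hj : 1 ≤ j) : (j - 1) * ℓ + ℓ = j * ℓ := by
  rw [Nat.sub_one_mul, Nat.sub_add_cancel (Nat.le_mul_of_pos_left ℓ hj)]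

lemma length_blockList (n ℓ : ℕ) (x : Fin n → Bool) (j : ℕ) :
    (blockList n ℓ x j).length = ℓ := by
  simp [blockList]

lemma getD_blockList (n ℓ : ℕ) (x : Fin n → Bool) (j : ℕ) {t : ℕ} (ht : t < ℓ) :
    (blockList n ℓ x j).getD t false = bitAt n x ((j - 1) * ℓ + t) := by
  simp [blockList, List.getD_eq_getElem?_getD, List.getElem?_range ht]

section BoundaryDeletion

variable (n ℓ : ℕ) (x : Fin n → Bool) (j e i : ℕ)

def boundaryPattern : ℕ → ℕ := fun m => if m = j then e else if m = j + 1 then i else 0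

def boundaryPieces : ℕ → List Bool := fun m =>
  if m = j then (blockList n ℓ x j).take (ℓ - e)
  else if m = j + 1 then (blockList n ℓ x (j + 1)).drop i
  else blockList n ℓ x m

def boundaryOutput : List Bool :=
  ((List.range (n / ℓ)).map fun m => boundaryPieces n ℓ x j e i (m + 1)).flatten

def boundaryWindow : Fin ℓ → Bool := fun t =>
  if (t : ℕ) < ℓ - e then bitAt n x ((j - 1) * ℓ + t)
  else bitAt n x (j * ℓ + i + (t - (ℓ - e)))

variable {n ℓ j e i}

lemma isDelOutput_boundaryOutput {δ : ℕ} (he : e ≤ δ) (hi : i ≤ δ) :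
    IsDelOutput n ℓ δ x (boundaryPattern j e i) (boundaryOutput n ℓ x j e i) := by
  refine ⟨boundaryPieces n ℓ x j e i, fun m _ => ?_, rfl⟩
  unfold boundaryPieces boundaryPattern
  split_ifs with hmj hmj'
  · subst hmj
    exact ⟨List.take_sublist _ _, he, by simp [length_blockList]⟩
  · subst hmj'
    exact ⟨List.drop_sublist _ _, hi, by simp [length_blockList]⟩
  · exact ⟨List.Sublist.refl _, Nat.zero_le δ, by simp [length_blockList]⟩

lemma startIdx_boundaryPattern : startIdx ℓ (boundaryPattern j e i) j = (j - 1) * ℓ := by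
  have hfull : ∀ m ∈ Finset.Icc 1 (j - 1), ℓ - boundaryPattern j e i m = ℓ := fun m hm => by
    have := Finset.mem_Icc.mp hm
    simp [boundaryPattern, show m ≠ j by omega, show m ≠ j + 1 by omega]
  rw [startIdx, Finset.sum_congr rfl hfull, Finset.sum_const, Nat.card_Icc, smul_eq_mul,
    Nat.add_sub_cancel]

lemma window_boundaryOutput (hj : 1 ≤ j) (hjb : j < n / ℓ) (hie : i + e ≤ ℓ) :
    window ℓ (boundaryOutput n ℓ x j e i) ((j - 1) * ℓ) = boundaryWindow n ℓ x j e i := by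
  funext t
  have hpieces : ∀ m < j - 1, (boundaryPieces n ℓ x j e i (m + 1)).length = ℓ := fun m hm => by
    rw [boundaryPieces, if_neg (by omega), if_neg (by omega), length_blockList]
  rw [window, boundaryOutput, List.getD_flatten_map_range_add_mul (by omega) hpieces,
    show n / ℓ - (j - 1) = n / ℓ - j - 1 + 1 + 1 by omega]
  simp only [List.range_succ_eq_map, List.map_cons, List.map_map, List.flatten_cons]
  rw [show j - 1 + 0 + 1 = j by omega]
  have hj0 : boundaryPieces n ℓ x j e i j = (blockList n ℓ x j).take (ℓ - e) := if_pos rfl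
  have hj1 : boundaryPieces n ℓ x j e i (j + 1) = (blockList n ℓ x (j + 1)).drop i := by
    rw [boundaryPieces, if_neg (Nat.succ_ne_self j), if_pos rfl]
  rw [hj0, hj1]
  have htake : ((blockList n ℓ x j).take (ℓ - e)).length = ℓ - e := by simp [length_blockList]
  unfold boundaryWindow
  split_ifs with ht
  · rw [List.getD_append _ _ _ _ (by omega), ← getD_blockList n ℓ x j t.isLt]
    simp [List.getD_eq_getElem?_getD, ht]
  · rw [List.getD_append_right _ _ _ _ (by omega), htake,
      List.getD_append _ _ _ _ (by simp [length_blockList]; omega),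
      List.getD_eq_getElem?_getD, List.getElem?_drop, ← List.getD_eq_getElem?_getD,
      getD_blockList n ℓ x (j + 1) (by omega), Nat.add_sub_cancel, Nat.add_assoc]

end BoundaryDeletion

def boundaryZone (ℓ δ b : ℕ) : Finset ℕ :=
  (Finset.Icc 1 (b - 1)).biUnion fun j => Finset.Icc (j * ℓ - δ) (j * ℓ + δ)

lemma card_boundaryZone {ℓ δ : ℕ} (b : ℕ) (hℓ : 2 * δ < ℓ) :
    (boundaryZone ℓ δ b).card = (b - 1) * (2 * δ + 1) := by
  rw [boundaryZone, Finset.card_biUnion]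
  · rw [Finset.sum_congr rfl fun j hj => ?_, Finset.sum_const, Nat.card_Icc, smul_eq_mul,
      Nat.add_sub_cancel]
    have := Nat.le_mul_of_pos_left ℓ (Finset.mem_Icc.mp hj).1
    rw [Nat.card_Icc]
    omega
  · intro j hj j' hj' hjj'
    wlog hlt : j < j' generalizing j j'
    · exact (this hj' hj hjj'.symm (by omega)).symm
    have := Nat.mul_le_mul_right ℓ (Nat.succ_le_of_lt hlt)
    rw [Nat.succ_mul] at this
    exact Finset.disjoint_left.mpr fun p hp hp' => by
      rw [Finset.mem_Icc] at hp hp'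
      omega

lemma lt_of_mem_boundaryZone {ℓ δ b p : ℕ} (hℓ : δ < ℓ) (hp : p ∈ boundaryZone ℓ δ b) :
    p < b * ℓ := by
  obtain ⟨j, hj, hpj⟩ := Finset.mem_biUnion.mp hp
  rw [Finset.mem_Icc] at hj hpj
  have := Nat.mul_le_mul_right ℓ (show j + 1 ≤ b by omega)
  rw [Nat.succ_mul] at this
  omega

def IsBlockDecoder (n ℓ δ : ℕ) (C : Set (Fin n → Bool)) (f : ℕ → (Fin ℓ → Bool) → ℕ) : Prop :=
  ∀ x ∈ C, ∀ d : ℕ → ℕ, ∀ y : List Bool, IsDelOutput n ℓ δ x d y →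
    ∀ j ∈ Finset.Icc 1 (n / ℓ - 1), f j (window ℓ y (startIdx ℓ d j)) = d j

namespace IsBlockDecoder

variable {n ℓ δ : ℕ} {C : Set (Fin n → Bool)} {f : ℕ → (Fin ℓ → Bool) → ℕ}
  {x x' : Fin n → Bool} {j : ℕ}

lemma apply_boundaryWindow (hf : IsBlockDecoder n ℓ δ C f) (hℓ : 2 * δ < ℓ) (hx : x ∈ C)
    (hj : 1 ≤ j) (hjb : j < n / ℓ) {e i : ℕ} (he : e ≤ δ) (hi : i ≤ δ) :
    f j (boundaryWindow n ℓ x j e i) = e := by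
  have h := hf x hx _ _ (isDelOutput_boundaryOutput (j := j) x he hi) j
    (Finset.mem_Icc.mpr ⟨hj, by omega⟩)
  rwa [startIdx_boundaryPattern, window_boundaryOutput x hj hjb (by omega), boundaryPattern,
    if_pos rfl] at h

lemma boundaryWindow_ne (hf : IsBlockDecoder n ℓ δ C f) (hℓ : 2 * δ < ℓ) (hx : x ∈ C)
    (hx' : x' ∈ C) (hj : 1 ≤ j) (hjb : j < n / ℓ) {e i e' i' : ℕ} (he : e ≤ δ) (hi : i ≤ δ)
    (he' : e' ≤ δ) (hi' : i' ≤ δ) (hee' : e ≠ e') :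
    boundaryWindow n ℓ x j e i ≠ boundaryWindow n ℓ x' j e' i' := fun h =>
  hee' <| by
    rw [← hf.apply_boundaryWindow hℓ hx hj hjb he hi, h,
      hf.apply_boundaryWindow hℓ hx' hj hjb he' hi']

lemma bitAt_mul_add_ne (hf : IsBlockDecoder n ℓ δ C f) (hδ : 0 < δ) (hℓ : 2 * δ < ℓ)
    (hx : x ∈ C) (hj : 1 ≤ j) (hjb : j < n / ℓ) {s : ℕ} (hs : s ≤ δ) :
    bitAt n x (j * ℓ + s) ≠ bitAt n x ((j - 1) * ℓ + (ℓ - 1)) := fun heq =>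
  hf.boundaryWindow_ne hℓ hx hx hj hjb hδ hs (Nat.zero_le δ) (Nat.zero_le δ) one_ne_zero <| by
    funext t
    have := t.isLt
    unfold boundaryWindow
    by_cases ht : (t : ℕ) < ℓ - 1
    · rw [if_pos ht, if_pos (by omega)]
    · rw [if_neg ht, if_pos (by omega), show (t : ℕ) = ℓ - 1 by omega, Nat.sub_self,
        Nat.add_zero, heq]

lemma bitAt_mul_add (hf : IsBlockDecoder n ℓ δ C f) (hδ : 0 < δ) (hℓ : 2 * δ < ℓ)
    (hx : x ∈ C) (hj : 1 ≤ j) (hjb : j < n / ℓ) {s : ℕ} (hs : s ≤ δ) :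
    bitAt n x (j * ℓ + s) = bitAt n x (j * ℓ) := by
  have h0 := hf.bitAt_mul_add_ne hδ hℓ hx hj hjb (Nat.zero_le δ)
  rw [Nat.add_zero, ← Bool.eq_not] at h0
  rw [Bool.eq_not.mpr (hf.bitAt_mul_add_ne hδ hℓ hx hj hjb hs), h0]

lemma bitAt_sub_ne (hf : IsBlockDecoder n ℓ δ C f) (hδ : 0 < δ) (hℓ : 2 * δ < ℓ)
    (hx : x ∈ C) (hj : 1 ≤ j) (hjb : j < n / ℓ) {k : ℕ} (hk : k < δ) :
    bitAt n x ((j - 1) * ℓ + (ℓ - 1 - k)) ≠ bitAt n x (j * ℓ) := fun heq =>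
  hf.boundaryWindow_ne hℓ hx hx hj hjb hk.le (Nat.zero_le δ) hk (Nat.zero_le δ)
    (Nat.succ_ne_self k).symm <| by
    funext t
    have := t.isLt
    unfold boundaryWindow
    by_cases ht : (t : ℕ) < ℓ - (k + 1)
    · rw [if_pos ht, if_pos (by omega)]
    by_cases ht' : (t : ℕ) < ℓ - k
    · rw [if_pos ht', if_neg ht, show (t : ℕ) = ℓ - 1 - k by omega, heq,
        show ℓ - 1 - k - (ℓ - (k + 1)) = 0 by omega, Nat.add_zero]
    · rw [if_neg ht', if_neg ht, Nat.add_zero,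
        hf.bitAt_mul_add hδ hℓ hx hj hjb (by omega), hf.bitAt_mul_add hδ hℓ hx hj hjb (by omega)]

lemma bitAt_eq_ite_of_mem_Icc (hf : IsBlockDecoder n ℓ δ C f) (hδ : 0 < δ) (hℓ : 2 * δ < ℓ)
    (hx : x ∈ C) (hj : 1 ≤ j) (hjb : j < n / ℓ) {p : ℕ}
    (hp : p ∈ Finset.Icc (j * ℓ - δ) (j * ℓ + δ)) :
    bitAt n x p = if j * ℓ ≤ p then bitAt n x (j * ℓ) else !bitAt n x (j * ℓ) := by
  have hjℓ := sub_one_mul_add_self ℓ hj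
  rw [Finset.mem_Icc] at hp
  split_ifs with hpj
  · rw [show p = j * ℓ + (p - j * ℓ) by omega]
    exact hf.bitAt_mul_add hδ hℓ hx hj hjb (by omega)
  · rw [show p = (j - 1) * ℓ + (ℓ - 1 - (j * ℓ - 1 - p)) by omega]
    exact Bool.eq_not.mpr (hf.bitAt_sub_ne hδ hℓ hx hj hjb (by omega))

lemma bitAt_mul_eq_of_prefix_eq (hf : IsBlockDecoder n ℓ δ C f) (hδ : 0 < δ) (hℓ : 2 * δ < ℓ)
    (hx : x ∈ C) (hx' : x' ∈ C) (hj : 1 ≤ j) (hjb : j < n / ℓ)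
    (hagree : ∀ t < ℓ - δ, bitAt n x ((j - 1) * ℓ + t) = bitAt n x' ((j - 1) * ℓ + t)) :
    bitAt n x (j * ℓ) = bitAt n x' (j * ℓ) := by
  have hjℓ := sub_one_mul_add_self ℓ hj
  by_contra hne
  refine hf.boundaryWindow_ne hℓ hx hx' hj hjb le_rfl (Nat.zero_le δ) (Nat.zero_le δ)
    (Nat.zero_le δ) hδ.ne' (funext fun t => ?_)
  have := t.isLt
  unfold boundaryWindow
  by_cases ht : (t : ℕ) < ℓ - δ
  · rw [if_pos ht, if_pos (by omega)]
    exact hagree t ht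
  · rw [if_neg ht, if_pos (by omega), Nat.add_zero, hf.bitAt_mul_add hδ hℓ hx hj hjb (by omega),
      hf.bitAt_eq_ite_of_mem_Icc hδ hℓ hx' hj hjb (Finset.mem_Icc.mpr ⟨by omega, by omega⟩),
      if_neg (by omega)]
    exact Bool.eq_not.mpr hne

lemma eq_of_bitAt_eq_off_boundaryZone (hf : IsBlockDecoder n ℓ δ C f) (hδ : 0 < δ)
    (hℓ : 2 * δ < ℓ) (hx : x ∈ C) (hx' : x' ∈ C)
    (h : ∀ p ∉ boundaryZone ℓ δ (n / ℓ), bitAt n x p = bitAt n x' p) : x = x' := by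
  have hbits : ∀ p, bitAt n x p = bitAt n x' p := by
    intro p
    -- inside the zone around boundary `j` both bits are fixed by the bit at `j * ℓ`,
    -- which is fixed by earlier bits
    induction p using Nat.strong_induction_on with
    | _ p ih =>
    by_cases hp : p ∈ boundaryZone ℓ δ (n / ℓ)
    · obtain ⟨j, hj, hpj⟩ := Finset.mem_biUnion.mp hp
      obtain ⟨hj1, hjb⟩ := Finset.mem_Icc.mp hj
      have hjℓ := sub_one_mul_add_self ℓ hj1
      have hcenter := hf.bitAt_mul_eq_of_prefix_eq hδ hℓ hx hx' hj1 (by omega) fun t ht =>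
        ih _ (by have := Finset.mem_Icc.mp hpj; omega)
      rw [hf.bitAt_eq_ite_of_mem_Icc hδ hℓ hx hj1 (by omega) hpj,
        hf.bitAt_eq_ite_of_mem_Icc hδ hℓ hx' hj1 (by omega) hpj, hcenter]
    · exact h p hp
  funext i
  simpa [bitAt] using hbits i

end IsBlockDecoder

theorem redundancy_lower_bound_block_decodable_general
    (n ℓ δ : ℕ) (hδ : 0 < δ) (hℓ : 2 * δ < ℓ)
    (C : Set (Fin n → Bool)) (hBD : BlockDecodable n ℓ δ C) :
    C.ncard ≤ 2 ^ (n - (2 * δ + 1) * (n / ℓ - 1)) := by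
  obtain ⟨f, -, hf : IsBlockDecoder n ℓ δ C f⟩ := hBD
  have hzone : ∀ p ∈ boundaryZone ℓ δ (n / ℓ), p < n := fun p hp =>
    (lt_of_mem_boundaryZone (by omega) hp).trans_le (Nat.div_mul_le_self n ℓ)
  set D := (boundaryZone ℓ δ (n / ℓ)).attachFin hzone
  have hdet : ∀ x ∈ C, ∀ x' ∈ C, Set.EqOn x x' (↑D)ᶜ → x = x' := fun x hx x' hx' hxx' =>
    hf.eq_of_bitAt_eq_off_boundaryZone hδ hℓ hx hx' fun p hp => by
      unfold bitAt
      split_ifs with hpn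
      · exact hxx' (by simpa [D] using hp)
      · rfl
  have hcard := Set.ncard_le_card_pow_of_eqOn_compl C D hdet
  rwa [Fintype.card_bool, Fintype.card_fin, Finset.card_attachFin, card_boundaryZone _ hℓ,
    mul_comm] at hcard

/-- Any block-by-block decodable code detecting up to d deletions
per block satisfies |C| <= 2^(n - (2d+1)(b-1)). -/
theorem redundancy_lower_bound_block_decodable
    (n ℓ δ : ℕ) (hδ : 0 < δ) (hℓ : 2 * δ < ℓ) (hℓn : ℓ ≤ n / 2) (hdvd : ℓ ∣ n)
    (hb : 2 ≤ n / ℓ)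
    (C : Set (Fin n → Bool)) (hC : Detects n ℓ δ C) (hBD : BlockDecodable n ℓ δ C) :
    C.ncard ≤ 2 ^ (n - (2 * δ + 1) * (n / ℓ - 1)) :=
  redundancy_lower_bound_block_decodable_general n ℓ δ hδ hℓ C hBD
end

section
/- Let n, ℓ, δ be positive integers with 2δ < ℓ ≤ n/2, ℓ ∣ n and b = n/ℓ ≥ 2, and let C ⊆ 𝔽₂ⁿ be a code that detects up to δ deletions per block. Then for every codeword x ∈ C and every j ∈ {1,…,b−1}, exactly one of the following holds: (i) the last δ bits of block j are all 1 and the first δ bits of block j+1 are all 0, i.e., x_{[jℓ−δ+1, jℓ]} = 1^δ and x_{[jℓ+1, jℓ+δ]} = 0^δ; or (ii) x_{[jℓ−δ+1, jℓ]} = 0^δ and x_{[jℓ+1, jℓ+δ]} = 1^δ. -/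
/-!
If a bit can be moved from the end of block `j` to the front of block `j + 1` without changing
the concatenated output, then one string arises from `x` under two deletion patterns that differ
at block `j`, which a detecting code forbids. Let `c` be the last bit of block `j`. Were one of
the first `δ` bits of block `j + 1` equal to `c`, we could either keep block `j` whole and delete
those `δ` bits, or delete the last bit of block `j` and keep that copy of `c` among them instead;
so these `δ` bits all equal `!c`. Dually, were one of the last `δ` bits of
block `j` equal to the first bit `!c` of block `j + 1`, it could replace that first bit after the
other last `δ` bits of block `j` are deleted; so they all equal `c`.
-/

theorem List.take_append_getElem_sublist {α : Type*} (l : List α) {m i : ℕ} (hmi : m ≤ i)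
    (hi : i < l.length) : (l.take m ++ [l[i]]).Sublist l := by
  have h := (List.take_sublist_take_left (l := l) hmi).append_right [l[i]]
  rw [List.take_append_getElem hi] at h
  exact h.trans (List.take_sublist _ _)

theorem List.getElem_cons_drop_sublist {α : Type*} (l : List α) {m i : ℕ} (him : i < m)
    (hi : i < l.length) : (l[i] :: l.drop m).Sublist l := by
  have h := (l.drop_sublist_drop_left (Nat.succ_le_of_lt him)).cons_cons l[i]
  rw [List.getElem_cons_drop hi] at h
  exact h.trans (List.drop_sublist _ _)

theorem List.flatten_map_range_eq_of_adjacent {α : Type*} {f g : ℕ → List α} {t b : ℕ}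
    (hb : t + 2 ≤ b) (hfg : ∀ k, k ≠ t → k ≠ t + 1 → f k = g k)
    (hmid : f t ++ f (t + 1) = g t ++ g (t + 1)) :
    ((List.range b).map f).flatten = ((List.range b).map g).flatten := by
  induction b, hb using Nat.le_induction with
  | base =>
    have hpre : (List.range t).map f = (List.range t).map g :=
      List.map_congr_left fun k hk => by
        rw [List.mem_range] at hk
        exact hfg k (by omega) (by omega)
    simp [List.range_succ, hpre, hmid]
  | succ b hb ih =>
    simp [List.range_succ, ih, hfg b (by omega) (by omega)]

section Blocks

variable {n ℓ δ : ℕ} {x : Fin n → Bool}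

@[simp]
theorem blockList_length (j : ℕ) : (blockList n ℓ x j).length = ℓ := by
  simp [blockList]

@[simp]
theorem blockList_getElem (j i : ℕ) (hi : i < (blockList n ℓ x j).length) :
    (blockList n ℓ x j)[i] = bitAt n x ((j - 1) * ℓ + i) := by
  simp [blockList]

def spliceBlocks (n ℓ : ℕ) (x : Fin n → Bool) (j : ℕ) (p q : List Bool) :
    ℕ → List Bool :=
  Function.update (Function.update (blockList n ℓ x) j p) (j + 1) q

theorem isDelOutput_spliceBlocks {j : ℕ} {p q : List Bool}
    (hp : p.Sublist (blockList n ℓ x j)) (hq : q.Sublist (blockList n ℓ x (j + 1)))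
    (hpδ : ℓ - δ ≤ p.length) (hqδ : ℓ - δ ≤ q.length) :
    IsDelOutput n ℓ δ x (fun m => ℓ - (spliceBlocks n ℓ x j p q m).length)
      (((List.range (n / ℓ)).map fun m => spliceBlocks n ℓ x j p q (m + 1)).flatten) := by
  refine ⟨spliceBlocks n ℓ x j p q, fun m _ => ?_, rfl⟩
  have hblock : (spliceBlocks n ℓ x j p q m).Sublist (blockList n ℓ x m) ∧
      ℓ - δ ≤ (spliceBlocks n ℓ x j p q m).length := by
    unfold spliceBlocks
    rcases eq_or_ne m (j + 1) with rfl | hm₁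
    · rw [Function.update_self]; exact ⟨hq, hqδ⟩
    rw [Function.update_of_ne hm₁]
    rcases eq_or_ne m j with rfl | hm₀
    · rw [Function.update_self]; exact ⟨hp, hpδ⟩
    · rw [Function.update_of_ne hm₀, blockList_length]
      exact ⟨.refl _, Nat.sub_le ℓ δ⟩
  have hlen := hblock.1.length_le
  rw [blockList_length] at hlen
  refine ⟨hblock.1, ?_, ?_⟩ <;> dsimp only <;> omega

theorem spliceBlocks_output_eq {j : ℕ} (hj : 1 ≤ j) (hjb : j + 1 ≤ n / ℓ)
    {p q p' q' : List Bool} (h : p ++ q = p' ++ q') :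
    ((List.range (n / ℓ)).map fun m => spliceBlocks n ℓ x j p q (m + 1)).flatten =
      ((List.range (n / ℓ)).map fun m => spliceBlocks n ℓ x j p' q' (m + 1)).flatten := by
  obtain ⟨t, rfl⟩ : ∃ t, j = t + 1 := ⟨j - 1, by omega⟩
  refine List.flatten_map_range_eq_of_adjacent (t := t) (by omega) (fun k hk₀ hk₁ => ?_) ?_
  · simp [spliceBlocks, hk₀, hk₁]
  · simpa [spliceBlocks] using h

theorem Detects.not_cons_sublist_of_append_sublist {C : Set (Fin n → Bool)}
    (hC : Detects n ℓ δ C) (hx : x ∈ C) {j : ℕ} (hj : 1 ≤ j) (hjb : j + 1 ≤ n / ℓ)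
    {u v : List Bool} {a : Bool} (hu : ℓ - δ ≤ u.length) (hv : ℓ - δ ≤ v.length)
    (hua : (u ++ [a]).Sublist (blockList n ℓ x j)) :
    ¬ (a :: v).Sublist (blockList n ℓ x (j + 1)) := by
  intro hav
  have hout := isDelOutput_spliceBlocks hua ((List.sublist_cons_self a v).trans hav)
    (by simp; omega) hv
  have hout' := isDelOutput_spliceBlocks ((List.sublist_append_left u [a]).trans hua) hav
    hu (by simp; omega)
  rw [spliceBlocks_output_eq hj hjb (p' := u) (q' := a :: v) (by simp)] at hout
  have hd := hC x hx x hx _ _ _ hout hout' j (Finset.mem_Icc.2 ⟨hj, by omega⟩)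
  have hlen := hua.length_le
  simp [spliceBlocks] at hd hlen
  omega

theorem Detects.bitAt_ne_first_of_next_block {C : Set (Fin n → Bool)}
    (hC : Detects n ℓ δ C) (hx : x ∈ C) {j : ℕ} (hj : 1 ≤ j)
    (hjb : j + 1 ≤ n / ℓ) {r : ℕ} (hr : ℓ - δ ≤ r) (hrℓ : r < ℓ) :
    bitAt n x ((j - 1) * ℓ + r) ≠ bitAt n x (j * ℓ) := by
  intro hbit
  have hℓ : 0 < (blockList n ℓ x (j + 1)).length := by simp; omega
  have hhead : (blockList n ℓ x (j + 1))[0] = bitAt n x (j * ℓ) := by simp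
  apply hC.not_cons_sublist_of_append_sublist hx hj hjb
    (u := (blockList n ℓ x j).take (ℓ - δ)) (v := (blockList n ℓ x (j + 1)).drop 1) (by simp)
    (by simp only [List.length_drop, blockList_length]; omega)
    ((blockList n ℓ x j).take_append_getElem_sublist hr (by simpa using hrℓ))
  rw [blockList_getElem, hbit, ← hhead, List.getElem_cons_drop, List.drop_zero]

theorem Detects.bitAt_ne_last_of_prev_block {C : Set (Fin n → Bool)}
    (hC : Detects n ℓ δ C) (hx : x ∈ C) (hδ : 0 < δ) {j : ℕ} (hj : 1 ≤ j)
    (hjb : j + 1 ≤ n / ℓ) {s : ℕ} (hs : s < δ) (hsℓ : s < ℓ) :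
    bitAt n x (j * ℓ + s) ≠ bitAt n x (j * ℓ - 1) := by
  intro hbit
  have hℓ : ℓ - 1 < (blockList n ℓ x j).length := by simp; omega
  have hlast :
      (blockList n ℓ x j).take (ℓ - 1) ++ [bitAt n x (j * ℓ + s)] = blockList n ℓ x j := by
    have hpos : j * ℓ - 1 = (j - 1) * ℓ + (ℓ - 1) := by
      have hjℓ : (j - 1) * ℓ + ℓ = j * ℓ := by
        rw [← Nat.add_one_mul, Nat.sub_add_cancel hj]
      omega
    rw [hbit, hpos, ← blockList_getElem _ _ hℓ, List.take_append_getElem hℓ,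
      Nat.sub_add_cancel (by omega), List.take_of_length_le (by simp)]
  refine hC.not_cons_sublist_of_append_sublist hx hj hjb
    (u := (blockList n ℓ x j).take (ℓ - 1)) (v := (blockList n ℓ x (j + 1)).drop δ)
    (by simp; omega) (by simp) (by rw [hlast]) ?_
  have h := (blockList n ℓ x (j + 1)).getElem_cons_drop_sublist hs (by simpa using hsℓ)
  rwa [blockList_getElem, Nat.add_sub_cancel] at h

end Blocks

theorem xor_of_forall_eq_of_forall_eq_not {ι : Type*} {s t : Finset ι} {f : ι → Bool}
    {c : Bool} (hs : s.Nonempty) (hsc : ∀ i ∈ s, f i = c) (htc : ∀ i ∈ t, f i = !c) :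
    Xor ((∀ i ∈ s, f i = true) ∧ ∀ i ∈ t, f i = false)
      ((∀ i ∈ s, f i = false) ∧ ∀ i ∈ t, f i = true) := by
  obtain ⟨i₀, hi₀⟩ := hs
  cases c
  · refine Or.inr ⟨⟨hsc, by simpa using htc⟩, fun h => ?_⟩
    simpa [hsc i₀ hi₀] using h.1 i₀ hi₀
  · refine Or.inl ⟨⟨hsc, by simpa using htc⟩, fun h => ?_⟩
    simpa [hsc i₀ hi₀] using h.1 i₀ hi₀

theorem boundary_marker_dichotomy_general
    (n ℓ δ : ℕ) (hδ : 0 < δ) (hℓ : 2 * δ < ℓ)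
    (C : Set (Fin n → Bool)) (hC : Detects n ℓ δ C)
    (x : Fin n → Bool) (hx : x ∈ C) :
    ∀ j ∈ Finset.Icc 1 (n / ℓ - 1),
      Xor'
        ((∀ i ∈ Finset.Icc (j * ℓ - δ + 1) (j * ℓ), bitAt n x (i - 1) = true) ∧
          (∀ i ∈ Finset.Icc (j * ℓ + 1) (j * ℓ + δ), bitAt n x (i - 1) = false))
        ((∀ i ∈ Finset.Icc (j * ℓ - δ + 1) (j * ℓ), bitAt n x (i - 1) = false) ∧
          (∀ i ∈ Finset.Icc (j * ℓ + 1) (j * ℓ + δ), bitAt n x (i - 1) = true)) := by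
  intro j hj
  obtain ⟨hj, hjb⟩ := Finset.mem_Icc.1 hj
  replace hjb : j + 1 ≤ n / ℓ := by omega
  have hjℓ : (j - 1) * ℓ + ℓ = j * ℓ := by rw [← Nat.add_one_mul, Nat.sub_add_cancel hj]
  set c := bitAt n x (j * ℓ - 1)
  have hnext : ∀ i ∈ Finset.Icc (j * ℓ + 1) (j * ℓ + δ), bitAt n x (i - 1) = !c := by
    intro i hi
    obtain ⟨hi₁, hi₂⟩ := Finset.mem_Icc.1 hi
    have h := hC.bitAt_ne_last_of_prev_block hx hδ hj hjb (s := i - 1 - j * ℓ)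
      (by omega) (by omega)
    rw [show j * ℓ + (i - 1 - j * ℓ) = i - 1 by omega] at h
    exact Bool.eq_not.2 h
  have hfirst : bitAt n x (j * ℓ) = !c := by
    simpa using hnext (j * ℓ + 1) (by simp; omega)
  have hprev : ∀ i ∈ Finset.Icc (j * ℓ - δ + 1) (j * ℓ), bitAt n x (i - 1) = c := by
    intro i hi
    obtain ⟨hi₁, hi₂⟩ := Finset.mem_Icc.1 hi
    have h := hC.bitAt_ne_first_of_next_block hx hj hjb (r := i - 1 - (j - 1) * ℓ)
      (by omega) (by omega)
    rw [show (j - 1) * ℓ + (i - 1 - (j - 1) * ℓ) = i - 1 by omega, hfirst] at h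
    exact Bool.not_eq_not.1 h
  exact xor_of_forall_eq_of_forall_eq_not ⟨j * ℓ, by simp; omega⟩ hprev hnext

/-- In any code detecting up to d deletions per block, at every block
boundary j, exactly one of the two marker patterns occurs:
(i) last d bits of block j all 1 and first d bits of block j+1 all 0, or
(ii) last d bits of block j all 0 and first d bits of block j+1 all 1. -/
theorem boundary_marker_dichotomy
    (n ℓ δ : ℕ) (hδ : 0 < δ) (hℓ : 2 * δ < ℓ) (hℓn : ℓ ≤ n / 2) (hdvd : ℓ ∣ n)
    (hb : 2 ≤ n / ℓ)
    (C : Set (Fin n → Bool)) (hC : Detects n ℓ δ C)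
    (x : Fin n → Bool) (hx : x ∈ C) :
    ∀ j ∈ Finset.Icc 1 (n / ℓ - 1),
      Xor'
        ((∀ i ∈ Finset.Icc (j * ℓ - δ + 1) (j * ℓ), bitAt n x (i - 1) = true) ∧
          (∀ i ∈ Finset.Icc (j * ℓ + 1) (j * ℓ + δ), bitAt n x (i - 1) = false))
        ((∀ i ∈ Finset.Icc (j * ℓ - δ + 1) (j * ℓ), bitAt n x (i - 1) = false) ∧
          (∀ i ∈ Finset.Icc (j * ℓ + 1) (j * ℓ + δ), bitAt n x (i - 1) = true)) :=
  boundary_marker_dichotomy_general n ℓ δ hδ hℓ C hC x hx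
end
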